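/- arXiv:1805.01823 — 2 statements merged into one kernel-verified Lean document; each statement's English description precedes it below -/
import Mathlib

section
/- Let k ≥ 1 be an integer and let G be a finite simple graph such that the near-k-twin relation ρ_k of G is an equivalence relation on V(G). Let V₁, …, V_m be those equivalence classes of ρ_k having more than 5k vertices, and let W = V₁ ∪ ⋯ ∪ V_m. Then there exist a set F₁ ⊆ {1,…,m}, a set F₂ of unordered pairs of distinct indices from {1,…,m}, and a simple graph G₂ on vertex set W of maximum degree at most 2km, such that for all distinct vertices u ∈ V_i and v ∈ V_j (with i = j allowed): {u,v} ∈ E(G) if and only if exactly one of the following holds: {u,v} ∈ E(G₂), or (i = j and i ∈ F₁), or (i ≠ j and {i,j} ∈ F₂). -/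
/-!
Let `u` be a vertex whose twin class is big (more than `5k` vertices) and let `X` be any twin
class. Double counting triples `(u', x, y)` with `u'` a twin of `u`, `x, y ∈ X`, `u' ~ x` and
`u' ≁ y` shows that `u` cannot have `2k` neighbours and `2k` non-neighbours in `X`: each `u'`
contributes at least `k²` triples, each pair `(x, y)` of twins at most `k`. So `u` is either
*dense* or sparse towards `X`, with fewer than `2k` exceptions. Density passes to the twins of
`u`, since otherwise `X` would have fewer than `5k` vertices, and it is symmetric between big
classes by counting the edges between them. The template graph joins two big classes (or a big
class to itself) when they are dense to each other, and `G₂` records where `G` deviates from it: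
fewer than `2k` vertices per class.
-/

/-- Two vertices `u`, `v` of a simple graph `G` are *near-`k`-twins* if the symmetric
difference of their open neighbourhoods has at most `k` elements. -/
def nearTwin {V : Type*} (G : SimpleGraph V) (k : ℕ) (u v : V) : Prop :=
  (symmDiff (G.neighborSet u) (G.neighborSet v)).ncard ≤ k

open Finset

section

variable {V : Type*} {G : SimpleGraph V} {k : ℕ} {u v w : V}

theorem nearTwin.symm (h : nearTwin G k u v) : nearTwin G k v u := by
  rwa [nearTwin, symmDiff_comm]

variable [Fintype V]

theorem nearTwin.card_le (h : nearTwin G k u v) {A : Finset V}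
    (hA : ∀ x ∈ A, G.Adj u x ∧ ¬G.Adj v x) : #A ≤ k :=
  calc #A = (A : Set V).ncard := (Set.ncard_coe_finset A).symm
    _ ≤ (symmDiff (G.neighborSet u) (G.neighborSet v)).ncard :=
      Set.ncard_le_ncard (fun x hx => Set.mem_symmDiff.2 (Or.inl (hA x hx))) (Set.toFinite _)
    _ ≤ k := h

variable [DecidableRel G.Adj]

theorem nearTwin.card_sub_le_card_filter_adj (h : nearTwin G k u v) {A : Finset V}
    (hA : ∀ x ∈ A, G.Adj u x) : #A - k ≤ #{x ∈ A | G.Adj v x} := by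
  have := h.card_le (A := {x ∈ A | ¬G.Adj v x}) fun x hx =>
    ⟨hA x (mem_filter.1 hx).1, (mem_filter.1 hx).2⟩
  have := card_filter_add_card_filter_not (s := A) (fun x => G.Adj v x)
  omega

theorem nearTwin.card_sub_le_card_filter_not_adj (h : nearTwin G k u v) {A : Finset V}
    (hA : ∀ x ∈ A, ¬G.Adj u x) : #A - k ≤ #{x ∈ A | ¬G.Adj v x} := by
  have := h.symm.card_le (A := {x ∈ A | G.Adj v x}) fun x hx =>
    ⟨(mem_filter.1 hx).2, hA x (mem_filter.1 hx).1⟩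
  have := card_filter_add_card_filter_not (s := A) (fun x => G.Adj v x)
  omega

open Classical in
noncomputable def twinClass (G : SimpleGraph V) (k : ℕ) (u : V) : Finset V :=
  {v | nearTwin G k u v}

omit [DecidableRel G.Adj] in
@[simp]
theorem mem_twinClass : v ∈ twinClass G k u ↔ nearTwin G k u v := by
  simp [twinClass]

omit [DecidableRel G.Adj] in
theorem coe_twinClass : (twinClass G k u : Set V) = {v | nearTwin G k u v} := by
  ext; simp

omit [DecidableRel G.Adj] in
theorem twinClass_eq_of_nearTwin (heq : Equivalence (nearTwin G k)) (h : nearTwin G k u v) :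
    twinClass G k u = twinClass G k v := by
  ext x
  simp only [mem_twinClass]
  exact ⟨heq.trans h.symm, heq.trans h⟩

theorem card_twinClass_mul_le (heq : Equivalence (nearTwin G k)) {A B : Finset V}
    (hA : A ⊆ twinClass G k w) (hB : B ⊆ twinClass G k w)
    (hAu : ∀ x ∈ A, G.Adj u x) (hBu : ∀ y ∈ B, ¬G.Adj u y) :
    #(twinClass G k u) * ((#A - k) * (#B - k)) ≤ #(A ×ˢ B) * k := by
  refine card_mul_le_card_mul (fun u' p => G.Adj u' p.1 ∧ ¬G.Adj u' p.2) (fun u' hu' => ?_)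
    (fun p hp => ?_)
  · have h := mem_twinClass.1 hu'
    rw [bipartiteAbove, filter_product (G.Adj u') (¬G.Adj u' ·), card_product]
    exact Nat.mul_le_mul (h.card_sub_le_card_filter_adj hAu)
      (h.card_sub_le_card_filter_not_adj hBu)
  · obtain ⟨hx, hy⟩ := mem_product.1 hp
    have hxy : nearTwin G k p.1 p.2 :=
      heq.trans (mem_twinClass.1 (hA hx)).symm (mem_twinClass.1 (hB hy))
    refine hxy.card_le fun u' hu' => ?_
    obtain ⟨-, hxu', hyu'⟩ := mem_bipartiteBelow _ |>.1 hu'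
    exact ⟨hxu'.symm, fun h => hyu' h.symm⟩

theorem card_filter_adj_lt_or_card_filter_not_adj_lt (hk : 1 ≤ k)
    (heq : Equivalence (nearTwin G k)) (hu : 5 * k < #(twinClass G k u)) (w : V) :
    #{x ∈ twinClass G k w | G.Adj u x} < 2 * k ∨
      #{x ∈ twinClass G k w | ¬G.Adj u x} < 2 * k := by
  by_contra! h
  obtain ⟨A, hA, hAcard⟩ := exists_subset_card_eq h.1
  obtain ⟨B, hB, hBcard⟩ := exists_subset_card_eq h.2
  have := card_twinClass_mul_le heq (hA.trans (filter_subset _ _)) (hB.trans (filter_subset _ _))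
    (fun x hx => (mem_filter.1 (hA hx)).2) (fun y hy => (mem_filter.1 (hB hy)).2)
  rw [card_product, hAcard, hBcard, show 2 * k - k = k by omega] at this
  nlinarith

def IsDenseTo (G : SimpleGraph V) [DecidableRel G.Adj] (k : ℕ) (u w : V) : Prop :=
  #{x ∈ twinClass G k w | ¬G.Adj u x} < 2 * k

theorem isDenseTo_congr_right (heq : Equivalence (nearTwin G k)) {w' : V}
    (h : nearTwin G k w w') : IsDenseTo G k u w ↔ IsDenseTo G k u w' := by
  rw [IsDenseTo, IsDenseTo, twinClass_eq_of_nearTwin heq h]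

theorem IsDenseTo.of_nearTwin_left (hk : 1 ≤ k) (heq : Equivalence (nearTwin G k)) {u' : V}
    (h : nearTwin G k u u') (hu' : 5 * k < #(twinClass G k u'))
    (hw : 5 * k < #(twinClass G k w)) (hd : IsDenseTo G k u w) : IsDenseTo G k u' w := by
  by_contra hnd
  have hsparse := (card_filter_adj_lt_or_card_filter_not_adj_lt hk heq hu' w).resolve_right hnd
  have hadj : #{x ∈ twinClass G k w | G.Adj u x} - k ≤ #{x ∈ twinClass G k w | G.Adj u' x} :=
    (h.card_sub_le_card_filter_adj fun x hx => (mem_filter.1 hx).2).trans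
      (card_le_card (filter_subset_filter _ (filter_subset _ _)))
  have := card_filter_add_card_filter_not (s := twinClass G k w) (fun x => G.Adj u x)
  unfold IsDenseTo at hd
  omega

theorem IsDenseTo.symm (hk : 1 ≤ k) (heq : Equivalence (nearTwin G k))
    (hu : 5 * k < #(twinClass G k u)) (hv : 5 * k < #(twinClass G k v))
    (hd : IsDenseTo G k u v) : IsDenseTo G k v u := by
  by_contra hnd
  have hdense : ∀ u' ∈ twinClass G k u,
      #(twinClass G k v) - 2 * k ≤ #((twinClass G k v).bipartiteAbove G.Adj u') := by
    intro u' hu'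
    have h := mem_twinClass.1 hu'
    have hd' : IsDenseTo G k u' v :=
      hd.of_nearTwin_left hk heq h (twinClass_eq_of_nearTwin heq h ▸ hu) hv
    have := card_filter_add_card_filter_not (s := twinClass G k v) (fun x => G.Adj u' x)
    unfold IsDenseTo at hd'
    rw [bipartiteAbove]
    omega
  have hsparse : ∀ v' ∈ twinClass G k v,
      #((twinClass G k u).bipartiteBelow G.Adj v') ≤ 2 * k := by
    intro v' hv'
    have h := mem_twinClass.1 hv'
    have hnd' : ¬IsDenseTo G k v' u := fun hd' =>
      hnd (hd'.of_nearTwin_left hk heq h.symm hv hu)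
    have := (card_filter_adj_lt_or_card_filter_not_adj_lt hk heq
      (twinClass_eq_of_nearTwin heq h ▸ hv) u).resolve_right hnd'
    simp only [bipartiteBelow, G.adj_comm _ v']
    omega
  have := card_mul_le_card_mul G.Adj hdense hsparse
  obtain ⟨c, hc⟩ : ∃ c, #(twinClass G k v) = 2 * k + c :=
    ⟨_, (Nat.add_sub_cancel' (by omega)).symm⟩
  rw [hc, Nat.add_sub_cancel_left] at this
  nlinarith

theorem isDenseTo_congr (hk : 1 ≤ k) (heq : Equivalence (nearTwin G k)) {u₀ v₀ : V}
    (hu : nearTwin G k u₀ u) (hv : nearTwin G k v₀ v) (hu₀ : 5 * k < #(twinClass G k u₀))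
    (hv₀ : 5 * k < #(twinClass G k v₀)) : IsDenseTo G k u v ↔ IsDenseTo G k u₀ v₀ := by
  rw [isDenseTo_congr_right heq hv.symm]
  exact ⟨fun hd => hd.of_nearTwin_left hk heq hu.symm hu₀ hv₀,
    fun hd => hd.of_nearTwin_left hk heq hu (twinClass_eq_of_nearTwin heq hu ▸ hu₀) hv₀⟩

/-- Symmetrising `IsDenseTo` makes this a graph; between big classes the symmetrisation is
vacuous by `IsDenseTo.symm`. -/
def twinDeviation (G : SimpleGraph V) [DecidableRel G.Adj] (k : ℕ) (W : Set V) :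
    SimpleGraph V where
  Adj u v :=
    u ≠ v ∧ u ∈ W ∧ v ∈ W ∧ (G.Adj u v ↔ ¬(IsDenseTo G k u v ∧ IsDenseTo G k v u))
  symm := ⟨fun _ _ ⟨huv, hu, hv, h⟩ =>
    ⟨huv.symm, hv, hu, by rwa [G.adj_comm, and_comm]⟩⟩
  loopless := ⟨fun _ h => h.1 rfl⟩

theorem twinDeviation_adj_iff (hk : 1 ≤ k) (heq : Equivalence (nearTwin G k)) {W : Set V}
    (hW : ∀ x ∈ W, 5 * k < #(twinClass G k x)) (huv : u ≠ v) (hu : u ∈ W) (hv : v ∈ W) :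
    (twinDeviation G k W).Adj u v ↔ (G.Adj u v ↔ ¬IsDenseTo G k u v) := by
  have hsymm : IsDenseTo G k u v ∧ IsDenseTo G k v u ↔ IsDenseTo G k u v :=
    and_iff_left_of_imp (IsDenseTo.symm hk heq (hW u hu) (hW v hv))
  simp only [twinDeviation, hsymm]
  exact ⟨fun h => h.2.2.2, fun h => ⟨huv, hu, hv, h⟩⟩

theorem ncard_neighborSet_twinDeviation_inter_lt (hk : 1 ≤ k)
    (heq : Equivalence (nearTwin G k)) {W : Set V}
    (hW : ∀ x ∈ W, 5 * k < #(twinClass G k x)) (v : V) :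
    ((twinDeviation G k W).neighborSet v ∩ twinClass G k w).ncard < 2 * k := by
  suffices ∃ t : Finset V,
      (twinDeviation G k W).neighborSet v ∩ twinClass G k w ⊆ t ∧ #t < 2 * k by
    obtain ⟨t, hsub, ht⟩ := this
    exact (Set.ncard_le_ncard hsub t.finite_toSet).trans_lt (by rwa [Set.ncard_coe_finset])
  by_cases hvW : v ∈ W
  swap
  · exact ⟨∅, fun u hu => (hvW hu.1.2.1).elim, by simp; omega⟩
  have hadj_iff : ∀ u ∈ twinClass G k w, (twinDeviation G k W).Adj v u →
      (G.Adj v u ↔ ¬IsDenseTo G k v w) := by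
    intro u hu hadj
    rw [isDenseTo_congr_right heq (mem_twinClass.1 hu)]
    exact (twinDeviation_adj_iff hk heq hW hadj.1 hvW hadj.2.2.1).1 hadj
  by_cases hd : IsDenseTo G k v w
  · refine ⟨_, fun u ⟨hadj, hu⟩ => ?_, hd⟩
    exact mem_filter.2 ⟨hu, fun h => (hadj_iff u hu hadj).1 h hd⟩
  · refine ⟨_, fun u ⟨hadj, hu⟩ => ?_,
      (card_filter_adj_lt_or_card_filter_not_adj_lt hk heq (hW v hvW) w).resolve_right hd⟩
    exact mem_filter.2 ⟨hu, (hadj_iff u hu hadj).2 hd⟩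

theorem ncard_neighborSet_twinDeviation_le {ι : Type*} [Fintype ι] (hk : 1 ≤ k)
    (heq : Equivalence (nearTwin G k)) {W : Set V} (hW : ∀ x ∈ W, 5 * k < #(twinClass G k x))
    (rep : ι → V) (hcover : W ⊆ ⋃ i, (twinClass G k (rep i) : Set V)) (v : V) :
    ((twinDeviation G k W).neighborSet v).ncard ≤ 2 * k * Fintype.card ι :=
  calc _ ≤ (⋃ i, (twinDeviation G k W).neighborSet v ∩ twinClass G k (rep i)).ncard := by
        refine Set.ncard_le_ncard (fun u hu => ?_) (Set.toFinite _)
        obtain ⟨i, hi⟩ := Set.mem_iUnion.1 (hcover hu.2.2.1)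
        exact Set.mem_iUnion.2 ⟨i, hu, hi⟩
    _ ≤ ∑ i, ((twinDeviation G k W).neighborSet v ∩ twinClass G k (rep i)).ncard :=
        Set.ncard_iUnion_le_of_fintype _
    _ ≤ ∑ _i : ι, 2 * k := sum_le_sum fun _ _ =>
        (ncard_neighborSet_twinDeviation_inter_lt hk heq hW v).le
    _ = 2 * k * Fintype.card ι := by simp [mul_comm]

end

theorem stmt11_general (V : Type) [Fintype V] (G : SimpleGraph V) (k : ℕ) (hk : 1 ≤ k)
    (heq : Equivalence (nearTwin G k)) (m : ℕ) (Vc : Fin m → Set V)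
    (hclass : ∀ i, ∃ u, Vc i = {v | nearTwin G k u v})
    (hbig : ∀ i, 5 * k < (Vc i).ncard) :
    ∃ (F₁ : Set (Fin m)) (F₂ : Set (Sym2 (Fin m))) (G₂ : SimpleGraph V),
      (∀ u v : V, G₂.Adj u v → u ∈ ⋃ i, Vc i) ∧
      (∀ v : V, (G₂.neighborSet v).ncard ≤ 2 * k * m) ∧
      (∀ (i j : Fin m) (u v : V), u ∈ Vc i → v ∈ Vc j → u ≠ v →
        (G.Adj u v ↔
          ((G₂.Adj u v ∧ ¬(i = j ∧ i ∈ F₁) ∧ ¬(i ≠ j ∧ s(i, j) ∈ F₂)) ∨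
           (¬G₂.Adj u v ∧ (i = j ∧ i ∈ F₁) ∧ ¬(i ≠ j ∧ s(i, j) ∈ F₂)) ∨
           (¬G₂.Adj u v ∧ ¬(i = j ∧ i ∈ F₁) ∧ (i ≠ j ∧ s(i, j) ∈ F₂))))) := by
  classical
  choose rep hrep using hclass
  simp_rw [← coe_twinClass] at hrep
  have hrep_big : ∀ i, 5 * k < #(twinClass G k (rep i)) := fun i => by
    simpa [hrep i] using hbig i
  have hrep_twin : ∀ {i u}, u ∈ Vc i → nearTwin G k (rep i) u := fun {i u} hu => by
    rwa [hrep, mem_coe, mem_twinClass] at hu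
  have hW : ∀ x ∈ ⋃ i, Vc i, 5 * k < #(twinClass G k x) := by
    simp only [Set.mem_iUnion]
    rintro x ⟨i, hi⟩
    exact twinClass_eq_of_nearTwin heq (hrep_twin hi) ▸ hrep_big i
  have hsymm : Std.Symm fun i j => IsDenseTo G k (rep i) (rep j) :=
    ⟨fun i j h => h.symm hk heq (hrep_big i) (hrep_big j)⟩
  refine ⟨{i | IsDenseTo G k (rep i) (rep i)}, Sym2.fromRel hsymm,
    twinDeviation G k (⋃ i, Vc i), fun u v h => h.2.1, fun v => ?_, fun i j u v hu hv huv => ?_⟩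
  · simpa using ncard_neighborSet_twinDeviation_le hk heq hW rep (by simp [hrep]) v
  rw [twinDeviation_adj_iff hk heq hW huv (Set.mem_iUnion_of_mem i hu) (Set.mem_iUnion_of_mem j hv),
    isDenseTo_congr hk heq (hrep_twin hu) (hrep_twin hv) (hrep_big i) (hrep_big j)]
  rcases eq_or_ne i j with rfl | hij
  · simp only [Set.mem_ofPred_eq, true_and, ne_eq, not_true_eq_false, false_and, not_false_eq_true,
      and_true]
    tauto
  · simp only [hij, Sym2.fromRel_prop, false_and, not_false_eq_true, true_and]
    tauto

theorem stmt11 (V : Type) [Fintype V] (G : SimpleGraph V) (k : ℕ) (hk : 1 ≤ k)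
    (heq : Equivalence (nearTwin G k)) (m : ℕ) (Vc : Fin m → Set V)
    (hclass : ∀ i, ∃ u, Vc i = {v | nearTwin G k u v})
    (hbig : ∀ i, 5 * k < (Vc i).ncard)
    (hinj : Function.Injective Vc)
    (hall : ∀ u : V, 5 * k < {v | nearTwin G k u v}.ncard →
      ∃ i, Vc i = {v | nearTwin G k u v}) :
    ∃ (F₁ : Set (Fin m)) (F₂ : Set (Sym2 (Fin m))) (G₂ : SimpleGraph V),
      (∀ u v : V, G₂.Adj u v → u ∈ ⋃ i, Vc i) ∧
      (∀ v : V, (G₂.neighborSet v).ncard ≤ 2 * k * m) ∧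
      (∀ (i j : Fin m) (u v : V), u ∈ Vc i → v ∈ Vc j → u ≠ v →
        (G.Adj u v ↔
          ((G₂.Adj u v ∧ ¬(i = j ∧ i ∈ F₁) ∧ ¬(i ≠ j ∧ s(i, j) ∈ F₂)) ∨
           (¬G₂.Adj u v ∧ (i = j ∧ i ∈ F₁) ∧ ¬(i ≠ j ∧ s(i, j) ∈ F₂)) ∨
           (¬G₂.Adj u v ∧ ¬(i = j ∧ i ∈ F₁) ∧ (i ≠ j ∧ s(i, j) ∈ F₂))))) :=
  stmt11_general V G k hk heq m Vc hclass hbig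
end

section
/- Let ℓ, q ∈ ℕ, let H be a finite simple graph, and let H' be a graph obtained from H by adding finitely many isolated vertices. If H' is (ℓ,q)-near-covered, then H is (2ℓ,q)-near-covered. -/
/-- A graph is `(k₀, p)`-near-uniform if for some `k ≤ k₀` the near-`k`-twin relation is
an equivalence relation with at most `p` equivalence classes. -/
def NearUniform {V : Type*} (G : SimpleGraph V) (k₀ p : ℕ) : Prop :=
  ∃ k ≤ k₀, Equivalence (nearTwin G k) ∧
    {C : Set V | ∃ u, C = {v | nearTwin G k u v}}.ncard ≤ p

/-- A graph is `(ℓ, q)`-near-covered if there is a set `S` of at most `q` vertices such that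
every vertex is a near-`ℓ`-twin of some element of `S`. -/
def NearCovered {V : Type*} (G : SimpleGraph V) (ℓ q : ℕ) : Prop :=
  ∃ S : Set V, S.ncard ≤ q ∧ ∀ v, ∃ s ∈ S, nearTwin G ℓ s v

/-! Adding isolated vertices amounts to mapping `H` along an embedding. A representative taken
from `H` is kept; an isolated representative `s` can only be a near-`ℓ`-twin of vertices of degree
at most `ℓ`, and any two such vertices are near-`2ℓ`-twins, so `s` may be replaced by any one of
the vertices it covers. -/

open SimpleGraph

variable {V V' : Type*}

theorem nearTwin.mono {G : SimpleGraph V} {k k' : ℕ} {u v : V} (hkk' : k ≤ k')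
    (h : nearTwin G k u v) : nearTwin G k' u v :=
  h.trans hkk'

theorem nearTwin_of_ncard_neighborSet_le [Finite V] {G : SimpleGraph V} {k k' : ℕ} {u v : V}
    (hu : (G.neighborSet u).ncard ≤ k) (hv : (G.neighborSet v).ncard ≤ k') :
    nearTwin G (k + k') u v :=
  calc (symmDiff (G.neighborSet u) (G.neighborSet v)).ncard
      ≤ (G.neighborSet u ∪ G.neighborSet v).ncard := Set.ncard_le_ncard symmDiff_le_sup
    _ ≤ (G.neighborSet u).ncard + (G.neighborSet v).ncard := Set.ncard_union_le _ _
    _ ≤ k + k' := add_le_add hu hv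

theorem nearTwin_iff_of_neighborSet_eq_empty {G : SimpleGraph V} {k : ℕ} {w : V}
    (hw : G.neighborSet w = ∅) (v : V) :
    nearTwin G k w v ↔ (G.neighborSet v).ncard ≤ k := by
  rw [nearTwin, hw, ← Set.bot_eq_empty, bot_symmDiff]

theorem SimpleGraph.neighborSet_map_eq_empty (G : SimpleGraph V) (f : V ↪ V') {x : V'}
    (hx : x ∉ Set.range f) : (G.map f).neighborSet x = ∅ :=
  Set.eq_empty_of_forall_notMem fun y hy ↦
    let ⟨a, _, _, hfa, _⟩ := (map_adj f G x y).mp hy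
    hx ⟨a, hfa⟩

theorem nearTwin_map_iff (G : SimpleGraph V) (f : V ↪ V') (k : ℕ) (u v : V) :
    nearTwin (G.map f) k (f u) (f v) ↔ nearTwin G k u v := by
  rw [nearTwin, nearTwin, neighborSet_map, neighborSet_map, ← Set.image_symmDiff f.injective,
    Set.ncard_image_of_injective _ f.injective]

theorem exists_nearTwin_of_nearTwin_map [Finite V] [Nonempty V] (G : SimpleGraph V)
    (f : V ↪ V') (ℓ : ℕ) (s : V') :
    ∃ a, ∀ v, nearTwin (G.map f) ℓ s (f v) → nearTwin G (2 * ℓ) a v := by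
  by_cases hs : s ∈ Set.range f
  · obtain ⟨a, rfl⟩ := hs
    exact ⟨a, fun v h ↦ ((nearTwin_map_iff G f ℓ a v).mp h).mono (by omega)⟩
  have hdeg (v : V) (h : nearTwin (G.map f) ℓ s (f v)) : (G.neighborSet v).ncard ≤ ℓ := by
    rwa [nearTwin_iff_of_neighborSet_eq_empty (G.neighborSet_map_eq_empty f hs),
      neighborSet_map, Set.ncard_image_of_injective _ f.injective] at h
  by_cases hcov : ∃ u, nearTwin (G.map f) ℓ s (f u)
  · obtain ⟨u, hu⟩ := hcov
    exact ⟨u, fun v hv ↦ two_mul ℓ ▸ nearTwin_of_ncard_neighborSet_le (hdeg u hu) (hdeg v hv)⟩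
  · exact ⟨Classical.arbitrary V, fun v hv ↦ (hcov ⟨v, hv⟩).elim⟩

theorem NearCovered.of_map [Finite V'] {G : SimpleGraph V} (f : V ↪ V') {ℓ q : ℕ}
    (h : NearCovered (G.map f) ℓ q) : NearCovered G (2 * ℓ) q := by
  have : Finite V := Finite.of_injective f f.injective
  cases isEmpty_or_nonempty V
  · exact ⟨∅, by simp, isEmptyElim⟩
  obtain ⟨S, hS, hcov⟩ := h
  choose g hg using exists_nearTwin_of_nearTwin_map G f ℓ
  refine ⟨g '' S, (Set.ncard_image_le S.toFinite).trans hS, fun v ↦ ?_⟩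
  obtain ⟨s, hsS, hsv⟩ := hcov (f v)
  exact ⟨g s, Set.mem_image_of_mem g hsS, hg s v hsv⟩

theorem stmt15 (ℓ q : ℕ) (V W : Type) [Fintype V] [Fintype W]
    (H : SimpleGraph V) (H' : SimpleGraph (V ⊕ W))
    (hemb : ∀ u v : V, H'.Adj (Sum.inl u) (Sum.inl v) ↔ H.Adj u v)
    (hiso : ∀ (w : W) (x : V ⊕ W), ¬ H'.Adj (Sum.inr w) x)
    (hcov : NearCovered H' ℓ q) :
    NearCovered H (2 * ℓ) q := by
  have hH' : H' = H.map Sum.inl := by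
    ext x y
    rcases x with u | w
    · rcases y with v | w
      · simpa [map_adj', hemb] using fun h ↦ h.ne
      · simpa [map_adj'] using fun h ↦ hiso w _ h.symm
    · simpa [map_adj'] using hiso w y
  subst hH'
  exact hcov.of_map Function.Embedding.inl
end
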